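/- Let (A_n, B_n)_{n≥1} be a deterministic sequence in S_δ × R_+^d and set X_n^x = g_n∘⋯∘g_1(x) where g_k(x) = A_k x + B_k. Then for all x, y ∈ R_+^d and all n, |X_n^x − X_n^y| ≤ ‖A_n⋯A_1‖·|x − y|, and moreover |X_n^x| ≥ δ·Σ_{k=1}^n |B_k| / ‖A_k⋯A_1‖ · ‖A_n⋯A_1‖; in particular |X_n^x − X_n^y|·1_{|X_n^x| ≤ K} ≤ K|x−y| / (δ Σ_{k=1}^n |B_k|/‖A_k⋯A_1‖). -/

import Mathlib

open Matrix BigOperators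

/-- The ℓ¹ norm on `ℝ^d`. -/
def l1 {d : ℕ} (x : Fin d → ℝ) : ℝ := ∑ i, |x i|

/-- The maximum column sum of a matrix. -/
noncomputable def matNorm {d : ℕ} (A : Matrix (Fin d) (Fin d) ℝ) : ℝ :=
  ⨆ j, ∑ i, A i j

/-- The semigroup `S` of nonnegative matrices each of whose columns contains a
positive entry. -/
def memS {d : ℕ} (A : Matrix (Fin d) (Fin d) ℝ) : Prop :=
  (∀ i j, 0 ≤ A i j) ∧ ∀ j, ∃ i, 0 < A i j

/-- The set `S_δ`. -/
def memSdelta {d : ℕ} (δ : ℝ) (A : Matrix (Fin d) (Fin d) ℝ) : Prop :=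
  memS A ∧ ∀ i j k, δ * A i k ≤ A i j

/-- The left product `A_n ⋯ A_1` (equal to `1` for `n = 0`). -/
def prodRev {d : ℕ} (A : ℕ → Matrix (Fin d) (Fin d) ℝ) : ℕ → Matrix (Fin d) (Fin d) ℝ
  | 0 => 1
  | n + 1 => A (n + 1) * prodRev A n

/-- The affine iteration `X_0^x = x`, `X_{n+1}^x = A_{n+1} X_n^x + B_{n+1}`. -/
def affIter {d : ℕ} (A : ℕ → Matrix (Fin d) (Fin d) ℝ) (B : ℕ → Fin d → ℝ)
    (x : Fin d → ℝ) : ℕ → Fin d → ℝ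
  | 0 => x
  | n + 1 => (A (n + 1)).mulVec (affIter A B x n) + B (n + 1)

/-!
The difference `X_n^x - X_n^y` is `A_n ⋯ A_1 (x - y)`, so the first bound is the operator-norm
bound of the column-sum norm on `ℓ¹`. For the lower bound, `X_n^x ≥ ∑_k A_n ⋯ A_{k+1} B_k`
entrywise. Every row of a matrix `T ∈ S_δ` is constant up to the factor `δ`, so
`|T v| ≥ δ ‖T‖ |v|` on `ℝ_+^d`; since `S_δ` is closed under products, this costs only one factor `δ`
for a whole tail product `T = A_n ⋯ A_{k+1}`, and `‖A_n ⋯ A_1‖ ≤ ‖T‖ ‖A_k ⋯ A_1‖` gives the term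
`δ |B_k| ‖A_n ⋯ A_1‖ / ‖A_k ⋯ A_1‖`.
-/

open Finset

namespace Matrix

variable {n α : Type*} [Semiring α] [PartialOrder α] [IsOrderedRing α]

lemma one_apply_nonneg [DecidableEq n] (i j : n) : 0 ≤ (1 : Matrix n n α) i j := by
  rw [one_apply]
  split_ifs
  exacts [zero_le_one, le_rfl]

lemma mul_apply_nonneg [Fintype n] {A B : Matrix n n α} (hA : ∀ i j, 0 ≤ A i j)
    (hB : ∀ i j, 0 ≤ B i j) (i j : n) : 0 ≤ (A * B) i j :=
  sum_nonneg fun l _ => mul_nonneg (hA i l) (hB l j)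

lemma mulVec_apply_nonneg [Fintype n] {A : Matrix n n α} {v : n → α} (hA : ∀ i j, 0 ≤ A i j)
    (hv : ∀ i, 0 ≤ v i) (i : n) : 0 ≤ (A *ᵥ v) i :=
  sum_nonneg fun j _ => mul_nonneg (hA i j) (hv j)

end Matrix

variable {d : ℕ}

lemma l1_nonneg (v : Fin d → ℝ) : 0 ≤ l1 v :=
  sum_nonneg fun _ _ => abs_nonneg _

lemma l1_of_nonneg {v : Fin d → ℝ} (hv : ∀ i, 0 ≤ v i) : l1 v = ∑ i, v i :=
  sum_congr rfl fun i _ => abs_of_nonneg (hv i)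

lemma l1_add_of_nonneg {v w : Fin d → ℝ} (hv : ∀ i, 0 ≤ v i) (hw : ∀ i, 0 ≤ w i) :
    l1 (v + w) = l1 v + l1 w := by
  rw [l1_of_nonneg (v := v + w) fun i => add_nonneg (hv i) (hw i), l1_of_nonneg hv,
    l1_of_nonneg hw]
  exact sum_add_distrib

lemma le_matNorm (A : Matrix (Fin d) (Fin d) ℝ) (j : Fin d) : ∑ i, A i j ≤ matNorm A :=
  le_ciSup (f := fun j => ∑ i, A i j) (Set.finite_range _).bddAbove j

lemma matNorm_nonneg {A : Matrix (Fin d) (Fin d) ℝ} (hA : ∀ i j, 0 ≤ A i j) : 0 ≤ matNorm A :=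
  Real.iSup_nonneg fun j => sum_nonneg fun i _ => hA i j

lemma matNorm_one_le : matNorm (1 : Matrix (Fin d) (Fin d) ℝ) ≤ 1 :=
  Real.iSup_le (fun j => by simp [one_apply]) zero_le_one

lemma matNorm_mul_le {A B : Matrix (Fin d) (Fin d) ℝ} (hA : ∀ i j, 0 ≤ A i j)
    (hB : ∀ i j, 0 ≤ B i j) : matNorm (A * B) ≤ matNorm A * matNorm B := by
  refine Real.iSup_le (fun j => ?_) (mul_nonneg (matNorm_nonneg hA) (matNorm_nonneg hB))
  calc ∑ i, (A * B) i j = ∑ l, (∑ i, A i l) * B l j := by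
        simp only [mul_apply, sum_mul]
        exact sum_comm
    _ ≤ ∑ l, matNorm A * B l j := by
        gcongr with l
        exacts [hB l j, le_matNorm A l]
    _ = matNorm A * ∑ l, B l j := (mul_sum ..).symm
    _ ≤ matNorm A * matNorm B := by
        gcongr
        exacts [matNorm_nonneg hA, le_matNorm B j]

lemma l1_mulVec_le {A : Matrix (Fin d) (Fin d) ℝ} (hA : ∀ i j, 0 ≤ A i j) (v : Fin d → ℝ) :
    l1 (A *ᵥ v) ≤ matNorm A * l1 v := by
  calc l1 (A *ᵥ v) ≤ ∑ i, ∑ j, A i j * |v j| := by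
        refine sum_le_sum fun i _ => (abs_sum_le_sum_abs (fun j => A i j * v j) univ).trans_eq ?_
        exact sum_congr rfl fun j _ => by rw [abs_mul, abs_of_nonneg (hA i j)]
    _ = ∑ j, (∑ i, A i j) * |v j| := by
        simp only [sum_mul]
        exact sum_comm
    _ ≤ ∑ j, matNorm A * |v j| := by
        gcongr with j
        exact le_matNorm A j
    _ = matNorm A * l1 v := (mul_sum ..).symm

lemma mul_matNorm_mul_mul_div_le {δ b : ℝ} {M P : Matrix (Fin d) (Fin d) ℝ} (hδ : 0 ≤ δ)
    (hM : ∀ i j, 0 ≤ M i j) (hP : ∀ i j, 0 ≤ P i j) (hb : 0 ≤ b) :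
    δ * matNorm (M * P) * (b / matNorm P) ≤ δ * matNorm M * b := by
  have hP0 := matNorm_nonneg hP
  calc δ * matNorm (M * P) * (b / matNorm P)
      ≤ δ * (matNorm M * matNorm P) * (b / matNorm P) := by
        gcongr
        exact matNorm_mul_le hM hP
    _ = δ * matNorm M * (matNorm P * b / matNorm P) := by ring
    _ ≤ δ * matNorm M * b := by
        gcongr
        · exact mul_nonneg hδ (matNorm_nonneg hM)
        · exact div_le_of_le_mul₀ hP0 hb (mul_comm _ _).le

namespace memSdelta

variable {δ : ℝ} {A M : Matrix (Fin d) (Fin d) ℝ}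

lemma nonneg (hA : memSdelta δ A) : ∀ i j, 0 ≤ A i j := hA.1.1

lemma mul (hM : memSdelta δ M) (hA : memSdelta δ A) : memSdelta δ (M * A) := by
  refine ⟨⟨mul_apply_nonneg hM.nonneg hA.nonneg, fun j => ?_⟩, fun i j k => ?_⟩
  · obtain ⟨l, hl⟩ := hA.1.2 j
    obtain ⟨i, hi⟩ := hM.1.2 l
    exact ⟨i, sum_pos' (fun m _ => mul_nonneg (hM.nonneg i m) (hA.nonneg m j))
      ⟨l, mem_univ l, mul_pos hi hl⟩⟩
  · simp only [mul_apply, mul_sum]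
    refine sum_le_sum fun l _ => ?_
    rw [mul_left_comm]
    exact mul_le_mul_of_nonneg_left (hA.2 l j k) (hM.nonneg i l)

lemma mul_matNorm_mul_l1_le (hA : memSdelta δ A) {v : Fin d → ℝ} (hv : ∀ i, 0 ≤ v i) :
    δ * matNorm A * l1 v ≤ l1 (A *ᵥ v) := by
  rcases isEmpty_or_nonempty (Fin d) with hd | hd
  · simpa [matNorm, Real.iSup_of_isEmpty] using l1_nonneg _
  -- `matNorm A` is attained at a column `k`, and `δ A i k ≤ A i j` for every entry of row `i`.
  obtain ⟨k, hk⟩ := exists_eq_ciSup_of_finite (f := fun j => ∑ i, A i j)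
  rw [l1_of_nonneg hv, l1_of_nonneg (mulVec_apply_nonneg hA.nonneg hv), matNorm, ← hk,
    mul_sum univ (fun i => A i k) δ, sum_mul_sum]
  exact sum_le_sum fun i _ => sum_le_sum fun j _ =>
    mul_le_mul_of_nonneg_right (hA.2 i j k) (hv j)

end memSdelta

variable {A : ℕ → Matrix (Fin d) (Fin d) ℝ} {B : ℕ → Fin d → ℝ}

lemma prodRev_nonneg (hA : ∀ n, 1 ≤ n → ∀ i j, 0 ≤ A n i j) (n : ℕ) :
    ∀ i j, 0 ≤ prodRev A n i j := by
  induction n with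
  | zero => exact one_apply_nonneg
  | succ n ih => exact mul_apply_nonneg (hA (n + 1) n.succ_pos) ih

lemma affIter_nonneg (hA : ∀ n, 1 ≤ n → ∀ i j, 0 ≤ A n i j) (hB : ∀ n i, 0 ≤ B n i)
    {x : Fin d → ℝ} (hx : ∀ i, 0 ≤ x i) (n : ℕ) : ∀ i, 0 ≤ affIter A B x n i := by
  induction n with
  | zero => exact hx
  | succ n ih =>
      exact fun i => add_nonneg (mulVec_apply_nonneg (hA (n + 1) n.succ_pos) ih i) (hB (n + 1) i)

lemma affIter_sub_affIter (x y : Fin d → ℝ) (n : ℕ) :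
    affIter A B x n - affIter A B y n = prodRev A n *ᵥ (x - y) := by
  induction n with
  | zero => simp [affIter, prodRev]
  | succ n ih =>
      rw [affIter, affIter, add_sub_add_right_eq_sub, ← mulVec_sub, ih, mulVec_mulVec]
      rfl

/-- `M` plays the role of a tail product `A_m ⋯ A_{n+1}` (with `M = 1` for `m = n`); keeping it
in `S_δ` through the induction is what makes the constant `δ` appear only once. -/
lemma sum_mul_matNorm_le_l1_mulVec_affIter {δ : ℝ} (hδ0 : 0 ≤ δ) (hδ1 : δ ≤ 1)
    (hA : ∀ n, 1 ≤ n → memSdelta δ (A n)) (hB : ∀ n i, 0 ≤ B n i) {x : Fin d → ℝ}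
    (hx : ∀ i, 0 ≤ x i) (n : ℕ) {M : Matrix (Fin d) (Fin d) ℝ} (hM : M = 1 ∨ memSdelta δ M) :
    δ * (∑ k ∈ Icc 1 n, l1 (B k) / matNorm (prodRev A k)) * matNorm (M * prodRev A n) ≤
      l1 (M *ᵥ affIter A B x n) := by
  induction n generalizing M with
  | zero => simpa using l1_nonneg _
  | succ n ih =>
    have hA0 : ∀ n, 1 ≤ n → ∀ i j, 0 ≤ A n i j := fun n hn => (hA n hn).nonneg
    obtain ⟨hM0, hMl1⟩ : (∀ i j, 0 ≤ M i j) ∧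
        ∀ v : Fin d → ℝ, (∀ i, 0 ≤ v i) → δ * matNorm M * l1 v ≤ l1 (M *ᵥ v) := by
      rcases hM with rfl | hM
      · refine ⟨one_apply_nonneg, fun v _ => ?_⟩
        rw [one_mulVec]
        exact mul_le_of_le_one_left (l1_nonneg v)
          (mul_le_one₀ hδ1 (matNorm_nonneg one_apply_nonneg) matNorm_one_le)
      · exact ⟨hM.nonneg, fun v hv => hM.mul_matNorm_mul_l1_le hv⟩
    have hMA : memSdelta δ (M * A (n + 1)) := by
      rcases hM with rfl | hM
      · simpa using hA (n + 1) n.succ_pos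
      · exact hM.mul (hA (n + 1) n.succ_pos)
    have hlast : δ * matNorm (M * prodRev A (n + 1)) *
        (l1 (B (n + 1)) / matNorm (prodRev A (n + 1))) ≤ l1 (M *ᵥ B (n + 1)) :=
      (mul_matNorm_mul_mul_div_le hδ0 hM0 (prodRev_nonneg hA0 (n + 1)) (l1_nonneg _)).trans
        (hMl1 _ (hB (n + 1)))
    have hassoc : M * prodRev A (n + 1) = M * A (n + 1) * prodRev A n := (mul_assoc ..).symm
    calc δ * (∑ k ∈ Icc 1 (n + 1), l1 (B k) / matNorm (prodRev A k)) *
          matNorm (M * prodRev A (n + 1))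
        = δ * (∑ k ∈ Icc 1 n, l1 (B k) / matNorm (prodRev A k)) *
              matNorm (M * A (n + 1) * prodRev A n) +
            δ * matNorm (M * prodRev A (n + 1)) *
              (l1 (B (n + 1)) / matNorm (prodRev A (n + 1))) := by
          rw [sum_Icc_succ_top (by omega), ← hassoc]
          ring
      _ ≤ l1 ((M * A (n + 1)) *ᵥ affIter A B x n) + l1 (M *ᵥ B (n + 1)) :=
          add_le_add (ih (Or.inr hMA)) hlast
      _ = l1 (M *ᵥ affIter A B x (n + 1)) := by
          rw [affIter, mulVec_add, mulVec_mulVec,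
            l1_add_of_nonneg (mulVec_apply_nonneg hMA.nonneg (affIter_nonneg hA0 hB hx n))
              (mulVec_apply_nonneg hM0 (hB (n + 1)))]

theorem stmt18_general {d : ℕ} (δ : ℝ) (hδ0 : 0 < δ) (hδ1 : δ ≤ 1)
    (A : ℕ → Matrix (Fin d) (Fin d) ℝ) (B : ℕ → Fin d → ℝ)
    (hA : ∀ n, 1 ≤ n → memSdelta δ (A n)) (hB : ∀ n i, 0 ≤ B n i)
    (x y : Fin d → ℝ) (hx : ∀ i, 0 ≤ x i) (n : ℕ) :
    l1 (affIter A B x n - affIter A B y n) ≤ matNorm (prodRev A n) * l1 (x - y) ∧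
    δ * (∑ k ∈ Finset.Icc 1 n, l1 (B k) / matNorm (prodRev A k)) *
        matNorm (prodRev A n) ≤ l1 (affIter A B x n) ∧
    ∀ K : ℝ, l1 (affIter A B x n) ≤ K →
      (δ * ∑ k ∈ Finset.Icc 1 n, l1 (B k) / matNorm (prodRev A k)) *
          l1 (affIter A B x n - affIter A B y n) ≤ K * l1 (x - y) := by
  have hP : ∀ m, ∀ i j, 0 ≤ prodRev A m i j := prodRev_nonneg fun m hm => (hA m hm).nonneg
  have hdiff : l1 (affIter A B x n - affIter A B y n) ≤ matNorm (prodRev A n) * l1 (x - y) := by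
    rw [affIter_sub_affIter]
    exact l1_mulVec_le (hP n) _
  have hlow : δ * (∑ k ∈ Icc 1 n, l1 (B k) / matNorm (prodRev A k)) * matNorm (prodRev A n) ≤
      l1 (affIter A B x n) := by
    simpa only [one_mul, one_mulVec] using
      sum_mul_matNorm_le_l1_mulVec_affIter hδ0.le hδ1 hA hB hx n (M := 1) (Or.inl rfl)
  refine ⟨hdiff, hlow, fun K hK => ?_⟩
  have hS : 0 ≤ δ * ∑ k ∈ Icc 1 n, l1 (B k) / matNorm (prodRev A k) :=
    mul_nonneg hδ0.le <| sum_nonneg fun k _ => div_nonneg (l1_nonneg _) (matNorm_nonneg (hP k))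
  calc (δ * ∑ k ∈ Icc 1 n, l1 (B k) / matNorm (prodRev A k)) *
        l1 (affIter A B x n - affIter A B y n)
      ≤ (δ * ∑ k ∈ Icc 1 n, l1 (B k) / matNorm (prodRev A k)) *
          (matNorm (prodRev A n) * l1 (x - y)) := mul_le_mul_of_nonneg_left hdiff hS
    _ = δ * (∑ k ∈ Icc 1 n, l1 (B k) / matNorm (prodRev A k)) * matNorm (prodRev A n) *
          l1 (x - y) := by ring
    _ ≤ K * l1 (x - y) := mul_le_mul_of_nonneg_right (hlow.trans hK) (l1_nonneg _)

theorem stmt18 {d : ℕ} (hd : 2 ≤ d) (δ : ℝ) (hδ0 : 0 < δ) (hδ1 : δ ≤ 1)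
    (A : ℕ → Matrix (Fin d) (Fin d) ℝ) (B : ℕ → Fin d → ℝ)
    (hA : ∀ n, 1 ≤ n → memSdelta δ (A n)) (hB : ∀ n i, 0 ≤ B n i)
    (x y : Fin d → ℝ) (hx : ∀ i, 0 ≤ x i) (hy : ∀ i, 0 ≤ y i) (n : ℕ) :
    l1 (affIter A B x n - affIter A B y n) ≤ matNorm (prodRev A n) * l1 (x - y) ∧
    δ * (∑ k ∈ Finset.Icc 1 n, l1 (B k) / matNorm (prodRev A k)) *
        matNorm (prodRev A n) ≤ l1 (affIter A B x n) ∧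
    ∀ K : ℝ, l1 (affIter A B x n) ≤ K →
      (δ * ∑ k ∈ Finset.Icc 1 n, l1 (B k) / matNorm (prodRev A k)) *
          l1 (affIter A B x n - affIter A B y n) ≤ K * l1 (x - y) :=
  stmt18_general δ hδ0 hδ1 A B hA hB x y hx n
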